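/- The rhombic-medium matrix A(η) with entries A₁₁ = (τ₁-μ)η₁² + μ, A₁₂ = A₂₁ = (λ+μ)η₁η₂, A₂₂ = (τ₂-μ)η₂² + μ is positive definite for all unit vectors η if and only if μ > 0, τ₁ > 0, τ₂ > 0, and (√(τ₁τ₂) - λ)(√(τ₁τ₂) + λ + 2μ) > 0. -/

import Mathlib

/-!
Write `x = η₁²`, `y = η₂²`, so that `(x, y)` ranges over the simplex `x, y ≥ 0`,
`x + y = 1`. Using `μ = μ (x + y)`, the diagonal entries become `τ₁ x + μ y` and `μ x + τ₂ y`,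
and the determinant becomes the binary quadratic form
`μτ₁ x² + (τ₁τ₂ + μ² - (λ + μ)²) x y + μτ₂ y²`.
A linear form is positive on the simplex iff both coefficients are, and a quadratic form
`a x² + b x y + c y²` iff `a, c > 0` and `b + 2√(ac) > 0`, by writing it as
`(√a x - √c y)² + (b + 2√(ac)) x y`. For `μ, τ₁, τ₂ > 0` the last condition is exactly
`(√(τ₁τ₂) - λ)(√(τ₁τ₂) + λ + 2μ) > 0`.
-/

theorem Matrix.posDef_fin_two_iff {a b d : ℝ} :
    (!![a, b; b, d] : Matrix (Fin 2) (Fin 2) ℝ).PosDef ↔ 0 < a ∧ 0 < a * d - b * b := by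
  constructor
  · intro h
    have ha := (posDef_iff_dotProduct_mulVec.1 h).2 (x := ![1, 0]) (by simp [funext_iff])
    have hdet := h.det_pos
    rw [det_fin_two_of] at hdet
    exact ⟨by simpa [dotProduct, mulVec] using ha, hdet⟩
  · rintro ⟨ha, hdet⟩
    refine posDef_iff_dotProduct_mulVec.2
      ⟨by ext i j; fin_cases i <;> fin_cases j <;> rfl, fun x hx => ?_⟩
    simp only [star_trivial, dotProduct, mulVec, Fin.sum_univ_two, of_apply, cons_val',
      cons_val_zero, cons_val_one, empty_val', cons_val_fin_one]
    refine pos_of_mul_pos_right ?_ ha.le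
    have hsq : a * (x 0 * (a * x 0 + b * x 1) + x 1 * (b * x 0 + d * x 1))
        = (a * x 0 + b * x 1) ^ 2 + (a * d - b * b) * x 1 ^ 2 := by ring
    rw [hsq]
    by_cases h1 : x 1 = 0
    · have h0 : x 0 ≠ 0 := fun h0 => hx (funext fun i => by fin_cases i <;> simp [h0, h1])
      simpa [h1] using (by positivity : 0 < (a * x 0) ^ 2)
    · positivity

theorem forall_sq_add_sq_eq_one_iff {P : ℝ → ℝ → Prop} :
    (∀ s t : ℝ, s ^ 2 + t ^ 2 = 1 → P (s ^ 2) (t ^ 2)) ↔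
      ∀ x y : ℝ, 0 ≤ x → 0 ≤ y → x + y = 1 → P x y := by
  constructor
  · intro h x y hx hy hxy
    have := h √x √y (by rwa [Real.sq_sqrt hx, Real.sq_sqrt hy])
    rwa [Real.sq_sqrt hx, Real.sq_sqrt hy] at this
  · exact fun h s t hst => h _ _ (sq_nonneg s) (sq_nonneg t) hst

theorem forall_simplex_linear_pos_iff {a b : ℝ} :
    (∀ x y : ℝ, 0 ≤ x → 0 ≤ y → x + y = 1 → 0 < a * x + b * y) ↔ 0 < a ∧ 0 < b := by
  constructor
  · intro h
    exact ⟨by simpa using h 1 0, by simpa using h 0 1⟩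
  · rintro ⟨ha, hb⟩ x y hx hy hxy
    rcases hx.eq_or_lt with rfl | hx
    · obtain rfl : y = 1 := by linarith
      simpa using hb
    · nlinarith

theorem forall_simplex_quadratic_pos_iff {a b c : ℝ} :
    (∀ x y : ℝ, 0 ≤ x → 0 ≤ y → x + y = 1 → 0 < a * x ^ 2 + b * x * y + c * y ^ 2) ↔
      0 < a ∧ 0 < c ∧ 0 < b + 2 * √(a * c) := by
  constructor
  · intro h
    have ha : 0 < a := by simpa using h 1 0
    have hc : 0 < c := by simpa using h 0 1
    refine ⟨ha, hc, ?_⟩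
    obtain ⟨p, hp, rfl⟩ : ∃ p, 0 < p ∧ a = p ^ 2 :=
      ⟨√a, by positivity, (Real.sq_sqrt ha.le).symm⟩
    obtain ⟨q, hq, rfl⟩ : ∃ q, 0 < q ∧ c = q ^ 2 :=
      ⟨√c, by positivity, (Real.sq_sqrt hc.le).symm⟩
    rw [← mul_pow, Real.sqrt_sq (by positivity)]
    -- the minimum on the simplex is attained at `(q, p) / (p + q)`
    have hmin := h (q / (p + q)) (p / (p + q)) (by positivity) (by positivity)
      (by field_simp; ring)
    have hval : p ^ 2 * (q / (p + q)) ^ 2 + b * (q / (p + q)) * (p / (p + q)) +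
        q ^ 2 * (p / (p + q)) ^ 2 = p * q * (b + 2 * (p * q)) / (p + q) ^ 2 := by
      field_simp; ring
    rw [hval] at hmin
    exact pos_of_mul_pos_right (div_pos_iff_of_pos_right (by positivity) |>.1 hmin) (by positivity)
  · rintro ⟨ha, hc, hb⟩ x y hx hy hxy
    have hsq : a * x ^ 2 + b * x * y + c * y ^ 2 =
        (√a * x - √c * y) ^ 2 + (b + 2 * √(a * c)) * (x * y) := by
      rw [Real.sqrt_mul ha.le]
      linear_combination (-x ^ 2) * Real.sq_sqrt ha.le - y ^ 2 * Real.sq_sqrt hc.le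
    rcases hx.eq_or_lt with rfl | hx
    · obtain rfl : y = 1 := by linarith
      simpa using hc
    rcases hy.eq_or_lt with rfl | hy
    · obtain rfl : x = 1 := by linarith
      simpa using ha
    rw [hsq]
    positivity

theorem rhombic_posDef_iff {lam mu tau1 tau2 eta1 eta2 : ℝ} (h : eta1 ^ 2 + eta2 ^ 2 = 1) :
    (!![(tau1-mu)*eta1^2 + mu, (lam+mu)*eta1*eta2;
        (lam+mu)*eta1*eta2, (tau2-mu)*eta2^2 + mu] : Matrix (Fin 2) (Fin 2) ℝ).PosDef ↔
      0 < tau1 * eta1 ^ 2 + mu * eta2 ^ 2 ∧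
        0 < mu * tau1 * (eta1 ^ 2) ^ 2
          + (tau1 * tau2 + mu ^ 2 - (lam + mu) ^ 2) * eta1 ^ 2 * eta2 ^ 2
          + mu * tau2 * (eta2 ^ 2) ^ 2 := by
  have h11 : (tau1 - mu) * eta1 ^ 2 + mu = tau1 * eta1 ^ 2 + mu * eta2 ^ 2 := by
    linear_combination -mu * h
  have h22 : (tau2 - mu) * eta2 ^ 2 + mu = mu * eta1 ^ 2 + tau2 * eta2 ^ 2 := by
    linear_combination -mu * h
  rw [Matrix.posDef_fin_two_iff, h11, h22]
  congr! 2
  ring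

theorem rhombic_discriminant_eq {lam mu tau1 tau2 : ℝ} (hmu : 0 ≤ mu)
    (htau : 0 ≤ tau1 * tau2) :
    tau1 * tau2 + mu ^ 2 - (lam + mu) ^ 2 + 2 * √(mu * tau1 * (mu * tau2)) =
      (√(tau1 * tau2) - lam) * (√(tau1 * tau2) + lam + 2 * mu) := by
  have hsqrt : √(mu * tau1 * (mu * tau2)) = mu * √(tau1 * tau2) := by
    rw [show mu * tau1 * (mu * tau2) = mu ^ 2 * (tau1 * tau2) by ring,
      Real.sqrt_mul (sq_nonneg mu), Real.sqrt_sq hmu]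
  rw [hsqrt]
  linear_combination -(Real.sq_sqrt htau)

theorem rhombic_posdef (lam mu tau1 tau2 : ℝ) :
    (∀ eta1 eta2 : ℝ, eta1^2 + eta2^2 = 1 →
      (!![(tau1-mu)*eta1^2 + mu, (lam+mu)*eta1*eta2;
          (lam+mu)*eta1*eta2, (tau2-mu)*eta2^2 + mu] : Matrix (Fin 2) (Fin 2) ℝ).PosDef)
    ↔ (mu > 0 ∧ tau1 > 0 ∧ tau2 > 0 ∧
        (Real.sqrt (tau1*tau2) - lam) * (Real.sqrt (tau1*tau2) + lam + 2*mu) > 0) := by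
  calc _ ↔ ∀ x y : ℝ, 0 ≤ x → 0 ≤ y → x + y = 1 → 0 < tau1 * x + mu * y ∧
          0 < mu * tau1 * x ^ 2 + (tau1 * tau2 + mu ^ 2 - (lam + mu) ^ 2) * x * y
            + mu * tau2 * y ^ 2 := by
        rw [← forall_sq_add_sq_eq_one_iff]
        exact forall₂_congr fun _ _ => forall_congr' rhombic_posDef_iff
    _ ↔ (0 < tau1 ∧ 0 < mu) ∧ 0 < mu * tau1 ∧ 0 < mu * tau2 ∧
          0 < tau1 * tau2 + mu ^ 2 - (lam + mu) ^ 2 + 2 * √(mu * tau1 * (mu * tau2)) := by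
        simp only [forall_and]
        exact and_congr forall_simplex_linear_pos_iff forall_simplex_quadratic_pos_iff
    _ ↔ _ := by
        constructor
        · rintro ⟨⟨htau1, hmu⟩, -, htau2, hdisc⟩
          have htau2 : 0 < tau2 := pos_of_mul_pos_right htau2 hmu.le
          rw [rhombic_discriminant_eq hmu.le (by positivity)] at hdisc
          exact ⟨hmu, htau1, htau2, hdisc⟩
        · rintro ⟨hmu, htau1, htau2, hdisc⟩
          rw [← rhombic_discriminant_eq hmu.le (by positivity)] at hdisc
          exact ⟨⟨htau1, hmu⟩, by positivity, by positivity, hdisc⟩
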